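/- Fix Δx > 0, Δt > 0 and λ ∈ ℝ, and let u : ℤ × ℤ → ℝ be any grid function. Define F̃₁ = (1/6)·(μ_n(u_{-2,0} + u_{0,0}))·(μ_n u_{-1,0})² + D_m²μ_n u_{-2,0} + λ·[ 2·(μ_n u_{-1,0})·μ_m((D_m μ_n u_{-2,0})²) + 2·(D_m²μ_n u_{-2,0})·μ_m²((μ_n u_{-2,0})²) − Δx·Δt·(D_n D_m μ_m u_{-2,0})·μ_n((D_m μ_m u_{-2,0})²) ] and G̃₁ = μ_m u_{-1,0}, the scheme residual Ã = D_m F̃₁ + D_n G̃₁ (the MC₈(λ) scheme for mKdV), the characteristic Q̃₂ = μ_m μ_n u_{-1,0}, and F̃₂ = (1/12)·(μ_n u_{-1,0})²·[ 2·(μ_n u_{-2,0})·(μ_m μ_n u_{-1,0}) + (μ_n u_{-1,0})·(μ_n u_{0,0}) ] + (μ_n u_{-1,0})·(D_m²μ_n u_{-2,0}) − (1/2)·(D_m μ_n u_{-2,0})·(D_m μ_n u_{-1,0}) + λ·(μ_m μ_n u_{-2,0})·(μ_m μ_n u_{-1,0})·[ (D_m μ_n u_{-2,0})·(D_m μ_n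 u_{-1,0}) + (μ_n(u_{-2,0} + u_{0,0}))·(D_m²μ_n u_{-2,0}) ] + (λ/4)·Δx·Δt·[ (D_m μ_m μ_n u_{-2,0})·(D_n μ_m² u_{-2,0}) − (μ_m² μ_n u_{-2,0})·(D_m D_n μ_m u_{-2,0}) ]·[ 2·μ_n((D_m μ_m u_{-2,0})²) − (D_m μ_m u_{-2,0})·(D_m μ_m u_{-2,1}) ], G̃₂ = (1/2)·(μ_m u_{-1,0})² + λ·Δt·Δx·(μ_m u_{-1,0})·(D_m²μ_m u_{-2,0})·[ (1/4)·(D_m μ_m u_{-1,0})·(D_m μ_m u_{-2,0}) − (D_m μ_m² u_{-2,0})² ]. Then the identity Q̃₂·Ã = D_m F̃₂ + D_n G̃₂ holds at every point of ℤ × ℤ. In particular, every grid function satisfying the MC₈(λ) scheme Ã = 0 satisfies the discrete momentum conservation law D_m F̃₂ + D_n G̃₂ = 0. -/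
import Mathlib

noncomputable section

/-- Shift operator: `(Sh i j u)(m,n) = u(m+i, n+j)`. -/
def Sh (i j : ℤ) (f : ℤ × ℤ → ℝ) : ℤ × ℤ → ℝ := fun p => f (p.1 + i, p.2 + j)

/-- Forward difference in space: `D_m f = (S_m f − f)/Δx`. -/
def Dm (dx : ℝ) (f : ℤ × ℤ → ℝ) : ℤ × ℤ → ℝ := fun p => (f (p.1 + 1, p.2) - f p) / dx

/-- Forward difference in time: `D_n f = (S_n f − f)/Δt`. -/
def Dn (dt : ℝ) (f : ℤ × ℤ → ℝ) : ℤ × ℤ → ℝ := fun p => (f (p.1, p.2 + 1) - f p) / dt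

/-- Forward average in space: `μ_m f = (S_m f + f)/2`. -/
def μm (f : ℤ × ℤ → ℝ) : ℤ × ℤ → ℝ := fun p => (f (p.1 + 1, p.2) + f p) / 2

/-- Forward average in time: `μ_n f = (S_n f + f)/2`. -/
def μn (f : ℤ × ℤ → ℝ) : ℤ × ℤ → ℝ := fun p => (f (p.1, p.2 + 1) + f p) / 2

/-- Discrete flux `F̃₁` of the MC₈(λ) scheme. -/
def F1MC8 (dx dt lam : ℝ) (u : ℤ × ℤ → ℝ) : ℤ × ℤ → ℝ :=
  (1/6 : ℝ) • (μn (Sh (-2) 0 u + u) * (μn (Sh (-1) 0 u)) ^ 2)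
    + Dm dx (Dm dx (μn (Sh (-2) 0 u)))
    + lam • ((2 : ℝ) • (μn (Sh (-1) 0 u) * μm ((Dm dx (μn (Sh (-2) 0 u))) ^ 2))
        + (2 : ℝ) • (Dm dx (Dm dx (μn (Sh (-2) 0 u))) * μm (μm ((μn (Sh (-2) 0 u)) ^ 2)))
        - (dx * dt) • (Dn dt (Dm dx (μm (Sh (-2) 0 u))) * μn ((Dm dx (μm (Sh (-2) 0 u))) ^ 2)))

/-- Discrete mass density `G̃₁ = μ_m u_{-1,0}` of the MC₈(λ) scheme. -/
def G1MC8 (u : ℤ × ℤ → ℝ) : ℤ × ℤ → ℝ := μm (Sh (-1) 0 u)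

/-- Residual of the MC₈(λ) scheme: `Ã = D_m F̃₁ + D_n G̃₁`. -/
def resMC8 (dx dt lam : ℝ) (u : ℤ × ℤ → ℝ) : ℤ × ℤ → ℝ :=
  Dm dx (F1MC8 dx dt lam u) + Dn dt (G1MC8 u)

/-- Discrete characteristic `Q̃₂ = μ_m μ_n u_{-1,0}`. -/
def Q2MC8 (u : ℤ × ℤ → ℝ) : ℤ × ℤ → ℝ := μm (μn (Sh (-1) 0 u))

/-- Discrete momentum flux `F̃₂` of the MC₈(λ) scheme. -/
def F2MC8 (dx dt lam : ℝ) (u : ℤ × ℤ → ℝ) : ℤ × ℤ → ℝ :=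
  (1/12 : ℝ) • ((μn (Sh (-1) 0 u)) ^ 2
      * ((2 : ℝ) • (μn (Sh (-2) 0 u) * μm (μn (Sh (-1) 0 u)))
          + μn (Sh (-1) 0 u) * μn u))
    + μn (Sh (-1) 0 u) * Dm dx (Dm dx (μn (Sh (-2) 0 u)))
    - (1/2 : ℝ) • (Dm dx (μn (Sh (-2) 0 u)) * Dm dx (μn (Sh (-1) 0 u)))
    + lam • (μm (μn (Sh (-2) 0 u)) * μm (μn (Sh (-1) 0 u))
        * (Dm dx (μn (Sh (-2) 0 u)) * Dm dx (μn (Sh (-1) 0 u))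
            + μn (Sh (-2) 0 u + u) * Dm dx (Dm dx (μn (Sh (-2) 0 u)))))
    + (lam / 4 * dx * dt) •
        ((Dm dx (μm (μn (Sh (-2) 0 u))) * Dn dt (μm (μm (Sh (-2) 0 u)))
            - μm (μm (μn (Sh (-2) 0 u))) * Dm dx (Dn dt (μm (Sh (-2) 0 u))))
          * ((2 : ℝ) • μn ((Dm dx (μm (Sh (-2) 0 u))) ^ 2)
              - Dm dx (μm (Sh (-2) 0 u)) * Dm dx (μm (Sh (-2) 1 u))))

/-- Discrete momentum density `G̃₂` of the MC₈(λ) scheme. -/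
def G2MC8 (dx dt lam : ℝ) (u : ℤ × ℤ → ℝ) : ℤ × ℤ → ℝ :=
  (1/2 : ℝ) • (μm (Sh (-1) 0 u)) ^ 2
    + (lam * dt * dx) • (μm (Sh (-1) 0 u) * Dm dx (Dm dx (μm (Sh (-2) 0 u)))
        * ((1/4 : ℝ) • (Dm dx (μm (Sh (-1) 0 u)) * Dm dx (μm (Sh (-2) 0 u)))
            - (Dm dx (μm (μm (Sh (-2) 0 u)))) ^ 2))

set_option maxHeartbeats 100000000 in
/-- The MC₈(λ) scheme preserves a discrete momentum conservation law. -/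
theorem MC8_momentum_conservation_law (dx dt lam : ℝ) (hdx : 0 < dx) (hdt : 0 < dt)
    (u : ℤ × ℤ → ℝ) :
    (∀ p : ℤ × ℤ,
      Q2MC8 u p * resMC8 dx dt lam u p
        = (Dm dx (F2MC8 dx dt lam u) + Dn dt (G2MC8 dx dt lam u)) p) ∧
    ((∀ p : ℤ × ℤ, resMC8 dx dt lam u p = 0) →
      ∀ p : ℤ × ℤ, (Dm dx (F2MC8 dx dt lam u) + Dn dt (G2MC8 dx dt lam u)) p = 0) := by
  have key : ∀ p : ℤ × ℤ,
      Q2MC8 u p * resMC8 dx dt lam u p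
        = (Dm dx (F2MC8 dx dt lam u) + Dn dt (G2MC8 dx dt lam u)) p := by
    rintro ⟨m, n⟩
    simp only [Q2MC8, resMC8, F2MC8, G2MC8, F1MC8, G1MC8, Dm, Dn, μm, μn, Sh,
      Pi.add_apply, Pi.sub_apply, Pi.mul_apply, Pi.smul_apply, Pi.pow_apply, smul_eq_mul]
    simp only [add_assoc]
    norm_num
    field_simp
    ring
  exact ⟨key, fun h p => by rw [← key p, h p, mul_zero]⟩
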